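/- arXiv:math/0609772 — 3 statements merged into one kernel-verified Lean document; each statement's English description precedes it below -/
import Mathlib

section
/- Let Q₁, Q₂ ∈ ℂ[z,w] be homogeneous polynomials with no common non-trivial zero, and let Q₁', Q₂' ∈ ℂ[z,w] be homogeneous polynomials with no common non-trivial zero. Then the compositions Q₁(Q₁',Q₂') and Q₂(Q₁',Q₂') have no common non-trivial zero (equivalently, no common factor). -/
open MvPolynomial

/-- If (Q₁,Q₂) and (Q₁',Q₂') are pairs of homogeneous polynomials with no common
non-trivial zero, then the compositions Q₁(Q₁',Q₂') and Q₂(Q₁',Q₂') have no common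
non-trivial zero. -/
theorem stmt_1 (n m : ℕ) (Q₁ Q₂ Q₁' Q₂' : MvPolynomial (Fin 2) ℂ)
    (hQ₁ : Q₁.IsHomogeneous n) (hQ₂ : Q₂.IsHomogeneous n)
    (hQ₁' : Q₁'.IsHomogeneous m) (hQ₂' : Q₂'.IsHomogeneous m)
    (h : ∀ z w : ℂ, (z, w) ≠ (0, 0) →
      ¬(eval ![z, w] Q₁ = 0 ∧ eval ![z, w] Q₂ = 0))
    (h' : ∀ z w : ℂ, (z, w) ≠ (0, 0) →
      ¬(eval ![z, w] Q₁' = 0 ∧ eval ![z, w] Q₂' = 0)) :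
    ∀ z w : ℂ, (z, w) ≠ (0, 0) →
      ¬(eval ![eval ![z, w] Q₁', eval ![z, w] Q₂'] Q₁ = 0 ∧
        eval ![eval ![z, w] Q₁', eval ![z, w] Q₂'] Q₂ = 0) := by
  intro z w hzw hc
  refine h _ _ (fun hp => h' z w hzw ?_) hc
  obtain ⟨h1, h2⟩ := Prod.mk.inj hp
  exact ⟨h1, h2⟩
end

section
/- Let f : ℂ² → ℂ² be given in homogeneous parts as f = (P·Q₁ + R₁, P·Q₂ + R₂) of degree D, and g = (P'·Q₁' + R₁', P'·Q₂' + R₂') of degree D', where P, P', Qᵢ, Qᵢ' are homogeneous, deg Rᵢ < D, deg Rᵢ' < D'. Then the homogeneous part of maximal degree of the first component of f ∘ g equals (P')^D · P(Q₁',Q₂') · Q₁(Q₁',Q₂'), and similarly for the second component with Q₂. In particular, if neither P(Q₁',Q₂')·Q₁(Q₁',Q₂') nor P(Q₁',Q₂')·Q₂(Q₁',Q₂') vanishes identically, then deg(f ∘ g) = D·D'. -/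
open MvPolynomial

namespace Stmt2Aux

variable {σ τ : Type*} {R : Type*} [CommRing R]

lemma deg_sum_of_mem_support {f : MvPolynomial σ R} {d : σ →₀ ℕ} (hd : d ∈ f.support) :
    ∑ i ∈ d.support, d i ≤ f.totalDegree :=
  le_totalDegree hd

lemma totalDegree_aeval_le (g : σ → MvPolynomial τ R) (m : ℕ)
    (hg : ∀ i, (g i).totalDegree ≤ m) (f : MvPolynomial σ R) :
    (aeval g f).totalDegree ≤ f.totalDegree * m := by
  rw [aeval_def, eval₂_eq]
  apply totalDegree_finsetSum_le
  intro d hd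
  calc (algebraMap R (MvPolynomial τ R) (coeff d f) * ∏ i ∈ d.support, g i ^ d i).totalDegree
      ≤ (algebraMap R (MvPolynomial τ R) (coeff d f)).totalDegree
          + (∏ i ∈ d.support, g i ^ d i).totalDegree := totalDegree_mul _ _
    _ ≤ 0 + ∑ i ∈ d.support, d i * m := by
        gcongr
        · rw [algebraMap_eq]; exact (totalDegree_C _).le
        · exact (totalDegree_finset_prod _ _).trans <| Finset.sum_le_sum fun i _ =>
            (totalDegree_pow _ _).trans (Nat.mul_le_mul_left _ (hg i))
    _ = (∑ i ∈ d.support, d i) * m := by rw [zero_add, Finset.sum_mul]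
    _ ≤ f.totalDegree * m := Nat.mul_le_mul_right _ (deg_sum_of_mem_support hd)

lemma degree_support_sum {f : MvPolynomial σ R} {k : ℕ} (hf : f.IsHomogeneous k)
    {d : σ →₀ ℕ} (hd : d ∈ f.support) : ∑ i ∈ d.support, d i = k := by
  have := hf (mem_support_iff.mp hd)
  rw [show (1 : σ → ℕ) = fun _ => 1 from rfl, ← Finsupp.degree_eq_weight_one] at this
  exact this

lemma aeval_mul_left {k : ℕ} (t : MvPolynomial τ R) (u : σ → MvPolynomial τ R)
    {f : MvPolynomial σ R} (hf : f.IsHomogeneous k) :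
    aeval (fun i => t * u i) f = t ^ k * aeval u f := by
  rw [aeval_def, aeval_def, eval₂_eq, eval₂_eq, Finset.mul_sum]
  apply Finset.sum_congr rfl
  intro d hd
  simp only [mul_pow, Finset.prod_mul_distrib, Finset.prod_pow_eq_pow_sum,
    degree_support_sum hf hd]
  ring

def Close (n : ℕ) (p q : MvPolynomial σ R) : Prop := p = q ∨ (p - q).totalDegree < n

lemma Close.mono {n N : ℕ} {p q : MvPolynomial σ R} (h : n ≤ N) (hc : Close n p q) :
    Close N p q := hc.imp id fun h' => h'.trans_le h

lemma Close.mul {n m : ℕ} {p P q Q : MvPolynomial σ R} (h1 : Close n p P) (h2 : Close m q Q)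
    (hq : q.totalDegree ≤ m) (hP : P.totalDegree ≤ n) : Close (n + m) (p * q) (P * Q) := by
  rcases h1 with rfl | h1 <;> rcases h2 with rfl | h2
  · exact Or.inl rfl
  · right
    rw [show p * q - p * Q = p * (q - Q) by ring]
    exact (totalDegree_mul _ _).trans_lt (Nat.add_lt_add_of_le_of_lt hP h2)
  · right
    rw [show p * q - P * q = (p - P) * q by ring]
    exact (totalDegree_mul _ _).trans_lt (Nat.add_lt_add_of_lt_of_le h1 hq)
  · right
    rw [show p * q - P * Q = (p - P) * q + P * (q - Q) by ring]
    refine (totalDegree_add _ _).trans_lt (max_lt ?_ ?_)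
    · exact (totalDegree_mul _ _).trans_lt (Nat.add_lt_add_of_lt_of_le h1 hq)
    · exact (totalDegree_mul _ _).trans_lt (Nat.add_lt_add_of_le_of_lt hP h2)

lemma Close.add {n : ℕ} {p P q Q : MvPolynomial σ R} (h1 : Close n p P) (h2 : Close n q Q) :
    Close n (p + q) (P + Q) := by
  rcases h1 with rfl | h1 <;> rcases h2 with rfl | h2
  · exact Or.inl rfl
  · right; rwa [show p + q - (p + Q) = q - Q by ring]
  · right; rwa [show p + q - (P + q) = p - P by ring]
  · right
    rw [show p + q - (P + Q) = (p - P) + (q - Q) by ring]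
    exact (totalDegree_add _ _).trans_lt (max_lt h1 h2)

lemma Close.pow {n : ℕ} {p P : MvPolynomial σ R} (h : Close n p P)
    (hp : p.totalDegree ≤ n) (hP : P.totalDegree ≤ n) (a : ℕ) :
    Close (a * n) (p ^ a) (P ^ a) := by
  induction a with
  | zero => exact Or.inl rfl
  | succ a ih =>
      have hPa : (P ^ a).totalDegree ≤ a * n :=
        (totalDegree_pow _ _).trans (Nat.mul_le_mul_left _ hP)
      have := ih.mul h hp hPa
      rw [show a * n + n = (a + 1) * n by ring] at this
      simpa [pow_succ] using this

lemma Close.sum {n : ℕ} {ι : Type*} (s : Finset ι) (u v : ι → MvPolynomial σ R)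
    (h : ∀ i ∈ s, Close n (u i) (v i)) :
    Close n (∑ i ∈ s, u i) (∑ i ∈ s, v i) := by
  classical
  induction s using Finset.induction with
  | empty => exact Or.inl rfl
  | insert _ _ hi ih =>
      rw [Finset.sum_insert hi, Finset.sum_insert hi]
      exact (h _ (Finset.mem_insert_self _ _)).add
        (ih fun i his => h i (Finset.mem_insert_of_mem his))

lemma close_prod {m : ℕ} {g G : σ → MvPolynomial τ R}
    (hc : ∀ i, Close m (g i) (G i)) (hg : ∀ i, (g i).totalDegree ≤ m)
    (hG : ∀ i, (G i).totalDegree ≤ m) (s : Finset σ) (d : σ → ℕ) :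
    Close (∑ i ∈ s, d i * m) (∏ i ∈ s, g i ^ d i) (∏ i ∈ s, G i ^ d i) := by
  classical
  induction s using Finset.induction with
  | empty => exact Or.inl rfl
  | @insert i s hi ih =>
      rw [Finset.sum_insert hi, Finset.prod_insert hi, Finset.prod_insert hi]
      refine ((hc i).pow (hg i) (hG i) (d i)).mul ih ?_ ?_
      · exact (totalDegree_finset_prod _ _).trans <| Finset.sum_le_sum fun j _ =>
          (totalDegree_pow _ _).trans (Nat.mul_le_mul_left _ (hg j))
      · exact (totalDegree_pow _ _).trans (Nat.mul_le_mul_left _ (hG i))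

lemma close_aeval {m k : ℕ} {g G : σ → MvPolynomial τ R}
    (hc : ∀ i, Close m (g i) (G i)) (hg : ∀ i, (g i).totalDegree ≤ m)
    (hG : ∀ i, (G i).totalDegree ≤ m) (f : MvPolynomial σ R) (hf : f.totalDegree ≤ k) :
    Close (k * m) (aeval g f) (aeval G f) := by
  rw [aeval_def, aeval_def, eval₂_eq, eval₂_eq]
  apply Close.sum
  intro d hd
  have h1 : Close (k * m) (∏ i ∈ d.support, g i ^ d i) (∏ i ∈ d.support, G i ^ d i) := by
    refine (close_prod hc hg hG d.support d).mono ?_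
    calc ∑ i ∈ d.support, d i * m = (∑ i ∈ d.support, d i) * m := by rw [Finset.sum_mul]
      _ ≤ k * m := Nat.mul_le_mul_right _ ((deg_sum_of_mem_support hd).trans hf)
  rcases h1 with h1 | h1
  · exact Or.inl (by rw [h1])
  · right
    rw [show algebraMap R (MvPolynomial τ R) (coeff d f) * ∏ i ∈ d.support, g i ^ d i
          - algebraMap R (MvPolynomial τ R) (coeff d f) * ∏ i ∈ d.support, G i ^ d i
        = algebraMap R (MvPolynomial τ R) (coeff d f)
          * ((∏ i ∈ d.support, g i ^ d i) - ∏ i ∈ d.support, G i ^ d i) by ring]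
    refine (totalDegree_mul _ _).trans_lt ?_
    rw [algebraMap_eq, totalDegree_C, zero_add]
    exact h1

lemma comp_component (D D' d e : ℕ) (hD' : 1 ≤ D') (hdD : d ≤ D) (heD' : e ≤ D')
    (P Q R P' Q₁' Q₂' R₁' R₂' : MvPolynomial (Fin 2) ℂ)
    (hP : P.IsHomogeneous d) (hQ : Q.IsHomogeneous (D - d)) (hR : R.totalDegree < D)
    (hP' : P'.IsHomogeneous e)
    (hQ₁' : Q₁'.IsHomogeneous (D' - e)) (hQ₂' : Q₂'.IsHomogeneous (D' - e))
    (hR₁' : R₁'.totalDegree < D') (hR₂' : R₂'.totalDegree < D') :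
    homogeneousComponent (D * D')
        (bind₁ ![P' * Q₁' + R₁', P' * Q₂' + R₂'] (P * Q + R)) =
      P' ^ D * bind₁ ![Q₁', Q₂'] P * bind₁ ![Q₁', Q₂'] Q ∧
    (bind₁ ![P' * Q₁' + R₁', P' * Q₂' + R₂'] (P * Q + R)).totalDegree ≤ D * D' := by
  rw [← aeval_eq_bind₁, ← aeval_eq_bind₁]
  have hF : (P * Q).IsHomogeneous D := by
    have := hP.mul hQ
    rwa [Nat.add_sub_cancel' hdD] at this
  have hPQ₁' : (P' * Q₁').IsHomogeneous D' := by
    have := hP'.mul hQ₁'; rwa [Nat.add_sub_cancel' heD'] at this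
  have hPQ₂' : (P' * Q₂').IsHomogeneous D' := by
    have := hP'.mul hQ₂'; rwa [Nat.add_sub_cancel' heD'] at this
  have hGhom : ∀ i, ((![P' * Q₁', P' * Q₂'] : Fin 2 → MvPolynomial (Fin 2) ℂ) i).IsHomogeneous D' := by
    intro i
    fin_cases i
    · simpa using hPQ₁'
    · simpa using hPQ₂'
  have hGdeg : ∀ i, ((![P' * Q₁', P' * Q₂'] : Fin 2 → MvPolynomial (Fin 2) ℂ) i).totalDegree ≤ D' :=
    fun i => (hGhom i).totalDegree_le
  have hclose : ∀ i, Close D' ((![P' * Q₁' + R₁', P' * Q₂' + R₂'] : Fin 2 → MvPolynomial (Fin 2) ℂ) i)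
      (![P' * Q₁', P' * Q₂'] i) := by
    intro i
    fin_cases i
    · right; simpa [add_sub_cancel_left] using hR₁'
    · right; simpa [add_sub_cancel_left] using hR₂'
  have hgdeg : ∀ i, ((![P' * Q₁' + R₁', P' * Q₂' + R₂'] : Fin 2 → MvPolynomial (Fin 2) ℂ) i).totalDegree ≤ D' := by
    intro i
    fin_cases i
    · simpa using (totalDegree_add _ _).trans (max_le hPQ₁'.totalDegree_le hR₁'.le)
    · simpa using (totalDegree_add _ _).trans (max_le hPQ₂'.totalDegree_le hR₂'.le)
  have hfd : (P * Q + R).totalDegree ≤ D :=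
    (totalDegree_add _ _).trans (max_le hF.totalDegree_le hR.le)
  have hub : (aeval ![P' * Q₁' + R₁', P' * Q₂' + R₂'] (P * Q + R)).totalDegree ≤ D * D' :=
    (totalDegree_aeval_le _ D' hgdeg _).trans (Nat.mul_le_mul_right _ hfd)
  refine ⟨?_, hub⟩
  have h2 : (aeval ![P' * Q₁' + R₁', P' * Q₂' + R₂'] R).totalDegree < D * D' := by
    refine (totalDegree_aeval_le _ D' hgdeg R).trans_lt ?_
    have : 0 < D' := hD'
    nlinarith [hR]
  have key : Close (D * D') (aeval ![P' * Q₁' + R₁', P' * Q₂' + R₂'] (P * Q + R))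
      (aeval ![P' * Q₁', P' * Q₂'] (P * Q)) := by
    have h1 := close_aeval hclose hgdeg hGdeg (P * Q) hF.totalDegree_le
    have h3 : Close (D * D') (aeval ![P' * Q₁' + R₁', P' * Q₂' + R₂'] R) 0 :=
      Or.inr (by simpa using h2)
    have := h1.add h3
    rwa [add_zero, ← map_add] at this
  have hhom : (aeval ![P' * Q₁', P' * Q₂'] (P * Q)).IsHomogeneous (D * D') := by
    have := hF.aeval _ hGhom
    rwa [Nat.mul_comm D' D] at this
  have hcomp : homogeneousComponent (D * D')
      (aeval ![P' * Q₁' + R₁', P' * Q₂' + R₂'] (P * Q + R)) = aeval ![P' * Q₁', P' * Q₂'] (P * Q) := by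
    rcases key with heq | hlt
    · rw [heq, homogeneousComponent_of_mem ((mem_homogeneousSubmodule _ _).mpr hhom), if_pos rfl]
    · rw [show aeval ![P' * Q₁' + R₁', P' * Q₂' + R₂'] (P * Q + R)
            = (aeval ![P' * Q₁' + R₁', P' * Q₂' + R₂'] (P * Q + R)
                - aeval ![P' * Q₁', P' * Q₂'] (P * Q)) + aeval ![P' * Q₁', P' * Q₂'] (P * Q) by ring,
        map_add, homogeneousComponent_eq_zero _ _ hlt, zero_add,
        homogeneousComponent_of_mem ((mem_homogeneousSubmodule _ _).mpr hhom), if_pos rfl]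
  rw [hcomp, map_mul]
  have hGfun : (![P' * Q₁', P' * Q₂'] : Fin 2 → MvPolynomial (Fin 2) ℂ)
      = fun i => P' * (![Q₁', Q₂'] i) := by
    funext i; fin_cases i <;> simp
  rw [hGfun, aeval_mul_left P' _ hP, aeval_mul_left P' _ hQ,
    show P' ^ d * aeval ![Q₁', Q₂'] P * (P' ^ (D - d) * aeval ![Q₁', Q₂'] Q)
      = (P' ^ d * P' ^ (D - d)) * aeval ![Q₁', Q₂'] P * aeval ![Q₁', Q₂'] Q by ring,
    ← pow_add, Nat.add_sub_cancel' hdD]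
end Stmt2Aux

/-- Top-degree homogeneous part of the composition of two maps of the class 𝒢, and
the degree of the composition. -/
theorem stmt_2 (D D' d e : ℕ) (hD : 1 ≤ D) (hD' : 1 ≤ D') (hdD : d ≤ D) (heD' : e ≤ D')
    (P Q₁ Q₂ R₁ R₂ P' Q₁' Q₂' R₁' R₂' : MvPolynomial (Fin 2) ℂ)
    (hP : P.IsHomogeneous d)
    (hQ₁ : Q₁.IsHomogeneous (D - d)) (hQ₂ : Q₂.IsHomogeneous (D - d))
    (hR₁ : R₁.totalDegree < D) (hR₂ : R₂.totalDegree < D)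
    (hP' : P'.IsHomogeneous e)
    (hQ₁' : Q₁'.IsHomogeneous (D' - e)) (hQ₂' : Q₂'.IsHomogeneous (D' - e))
    (hR₁' : R₁'.totalDegree < D') (hR₂' : R₂'.totalDegree < D') :
    homogeneousComponent (D * D')
        (bind₁ ![P' * Q₁' + R₁', P' * Q₂' + R₂'] (P * Q₁ + R₁)) =
      P' ^ D * bind₁ ![Q₁', Q₂'] P * bind₁ ![Q₁', Q₂'] Q₁ ∧
    homogeneousComponent (D * D')
        (bind₁ ![P' * Q₁' + R₁', P' * Q₂' + R₂'] (P * Q₂ + R₂)) =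
      P' ^ D * bind₁ ![Q₁', Q₂'] P * bind₁ ![Q₁', Q₂'] Q₂ ∧
    (P' ^ D * bind₁ ![Q₁', Q₂'] P * bind₁ ![Q₁', Q₂'] Q₁ ≠ 0 →
     P' ^ D * bind₁ ![Q₁', Q₂'] P * bind₁ ![Q₁', Q₂'] Q₂ ≠ 0 →
      (bind₁ ![P' * Q₁' + R₁', P' * Q₂' + R₂'] (P * Q₁ + R₁)).totalDegree = D * D' ∧
      (bind₁ ![P' * Q₁' + R₁', P' * Q₂' + R₂'] (P * Q₂ + R₂)).totalDegree = D * D') := by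
  obtain ⟨hc₁, hu₁⟩ := Stmt2Aux.comp_component D D' d e hD' hdD heD' P Q₁ R₁ P' Q₁' Q₂' R₁' R₂'
    hP hQ₁ hR₁ hP' hQ₁' hQ₂' hR₁' hR₂'
  obtain ⟨hc₂, hu₂⟩ := Stmt2Aux.comp_component D D' d e hD' hdD heD' P Q₂ R₂ P' Q₁' Q₂' R₁' R₂'
    hP hQ₂ hR₂ hP' hQ₁' hQ₂' hR₁' hR₂'
  refine ⟨hc₁, hc₂, fun h₁ h₂ => ⟨?_, ?_⟩⟩
  · have : ¬ (bind₁ ![P' * Q₁' + R₁', P' * Q₂' + R₂'] (P * Q₁ + R₁)).totalDegree < D * D' := by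
      intro h
      exact h₁ (hc₁ ▸ homogeneousComponent_eq_zero _ _ h)
    omega
  · have : ¬ (bind₁ ![P' * Q₁' + R₁', P' * Q₂' + R₂'] (P * Q₂ + R₂)).totalDegree < D * D' := by
      intro h
      exact h₂ (hc₂ ▸ homogeneousComponent_eq_zero _ _ h)
    omega
end

section
/- For the map f(u,v) = ((u³+v)/u, v³/u) on ℂ*×ℂ, the open set V = {(u,v) ∈ ℂ² : 0 < |u| < 1/2 and |v| < |u|³/4} satisfies f(V) ⊆ V; that is, for (u,v) ∈ V: |(u³+v)/u| < 1/2, and |v³/u| < |(u³+v)/u|³ / 4, with (u³+v)/u ≠ 0. -/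
/-- The region `V = {0 < |u| < 1/2, |v| < |u|³/4}` is invariant under
`(u,v) ↦ ((u³+v)/u, v³/u)`. -/
theorem stmt_9 (u v : ℂ) (hu0 : 0 < ‖u‖) (hu : ‖u‖ < 1 / 2)
    (hv : ‖v‖ < (‖u‖) ^ 3 / 4) :
    ‖(u ^ 3 + v) / u‖ < 1 / 2 ∧
    0 < ‖(u ^ 3 + v) / u‖ ∧
    ‖v ^ 3 / u‖ < (‖(u ^ 3 + v) / u‖) ^ 3 / 4 := by
  set a := ‖u‖ with ha
  set b := ‖v‖ with hb
  have hb0 : 0 ≤ b := norm_nonneg v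
  have hupper : ‖u ^ 3 + v‖ ≤ a ^ 3 + b := by
    calc ‖u ^ 3 + v‖ ≤ ‖u ^ 3‖ + ‖v‖ :=
          norm_add_le _ _
      _ = a ^ 3 + b := by rw [norm_pow]
  have hlower : a ^ 3 - b ≤ ‖u ^ 3 + v‖ := by
    have h := norm_add_le (u ^ 3 + v) (-v)
    rw [add_neg_cancel_right, norm_neg, norm_pow] at h
    linarith
  rw [norm_div, norm_div, norm_pow]
  have key : (3 : ℝ) / 4 * a ^ 2 ≤ ‖u ^ 3 + v‖ / a := by
    rw [le_div_iff₀ hu0]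
    nlinarith
  refine ⟨?_, ?_, ?_⟩
  · rw [div_lt_iff₀ hu0]
    nlinarith
  · apply div_pos _ hu0
    have : 0 < a ^ 3 - b := by nlinarith
    linarith [hlower]
  · have hb3 : b ^ 3 / a < a ^ 8 / 64 := by
      rw [div_lt_div_iff₀ hu0 (by norm_num)]
      have hcube : b ^ 3 < (a ^ 3 / 4) ^ 3 := by
        exact pow_lt_pow_left₀ hv hb0 (by norm_num)
      nlinarith
    have h2 : a ^ 8 / 64 ≤ (3 / 4 * a ^ 2) ^ 3 / 4 := by
      have ha2 : a ^ 2 ≤ 1 / 4 := by nlinarith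
      nlinarith [pow_pos hu0 6, pow_pos hu0 8, sq_nonneg a]
    have h3 : (3 / 4 * a ^ 2) ^ 3 / 4 ≤ (‖u ^ 3 + v‖ / a) ^ 3 / 4 := by
      gcongr
    linarith
end
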